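/- Let a₁,…,aₙ, b₁,…,bₙ ∈ A and set ω₁ := Σⱼ π(aⱼ)∘[D, π(bⱼ)]_σ, ω̂₁ := Σⱼ âⱼ∘[D, b̂ⱼ]_{σ°}, ω₂ := Σⱼ âⱼ∘[ω₁, b̂ⱼ]_{σ°} and D_ω := D + ω₁ + ω̂₁ + ω₂. Then the non-linear term satisfies J∘ω₂ = ε'·(ω₂∘J), and consequently the twisted-fluctuated operator is compatible with the real structure: J∘D_ω = ε'·(D_ω∘J). (This is the statement that (A, H, D_ω) together with σ, Γ and J retains all the properties of a real twisted spectral triple except possibly the twisted first-order condition.) -/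

import Mathlib

/-- Conjugation `T ↦ J ∘ T ∘ J⁻¹` of a `ℂ`-linear endomorphism by a conjugate-linear
equivalence `J`; applied to `π(a)` it gives the "hat" `â = J∘π(a)∘J⁻¹`. -/
noncomputable def hatConj {V : Type*} [AddCommGroup V] [Module ℂ V]
    (J : V ≃ₗ⋆[ℂ] V) (T : Module.End ℂ V) : Module.End ℂ V where
  toFun x := J (T (J.symm x))
  map_add' x y := by simp
  map_smul' c x := by
    simp only [LinearEquiv.map_smulₛₗ, LinearMap.map_smulₛₗ, RingHom.id_apply,
      map_smulₛₗ, starRingEnd_self_apply]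

/-- The non-linear term `ω₂ = Σⱼ âⱼ ∘ [ω₁, b̂ⱼ]_{σ°}`, with
`ω₁ = Σₖ π(aₖ)[D,π(bₖ)]_σ`. -/
noncomputable def omegaTwo {V A : Type*} [AddCommGroup V] [Module ℂ V]
    [Ring A] [Algebra ℂ A] (J : V ≃ₗ⋆[ℂ] V) (π : A →ₐ[ℂ] Module.End ℂ V)
    (σ : A ≃ₐ[ℂ] A) (D : Module.End ℂ V) {n : ℕ} (a b : Fin n → A) : Module.End ℂ V :=
  ∑ j, hatConj J (π (a j)) *
    ((∑ k, π (a k) * (D * π (b k) - π (σ (b k)) * D)) * hatConj J (π (b j))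
      - hatConj J (π (σ (b j))) * (∑ k, π (a k) * (D * π (b k) - π (σ (b k)) * D)))

/-- The twisted-fluctuated Dirac operator `D_ω = D + ω₁ + ω̂₁ + ω₂`. -/
noncomputable def twistedFluct {V A : Type*} [AddCommGroup V] [Module ℂ V]
    [Ring A] [Algebra ℂ A] (J : V ≃ₗ⋆[ℂ] V) (π : A →ₐ[ℂ] Module.End ℂ V)
    (σ : A ≃ₐ[ℂ] A) (D : Module.End ℂ V) {n : ℕ} (a b : Fin n → A) : Module.End ℂ V :=
  D + (∑ j, π (a j) * (D * π (b j) - π (σ (b j)) * D))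
    + (∑ j, hatConj J (π (a j)) * (D * hatConj J (π (b j)) - hatConj J (π (σ (b j))) * D))
    + omegaTwo J π σ D a b

/-! With `fluct T x y z := Σₖ xₖ (T yₖ - zₖ T)` one has `ω₁ = fluct D x y z`,
`ω̂₁ = fluct D x̂ ŷ ẑ` and `ω₂ = fluct ω₁ x̂ ŷ ẑ`, where `x = π ∘ a`, `y = π ∘ b`, `z = π ∘ σ ∘ b`.
Conjugation by `J` is a ring endomorphism of `End V`, involutive because `J²` is a scalar, and it
sends `D` to `ε' D`. Hence it sends `ω₁ ↦ ε' ω̂₁`, `ω̂₁ ↦ ε' ω₁` and `ω₂ ↦ ε' fluct ω̂₁ x y z`;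
the order-zero condition lets the two nested fluctuations be swapped, so `ω₂ ↦ ε' ω₂`. -/

section Fluct

variable {R ι : Type*} [Ring R] [Fintype ι]

def fluct (T : R) (x y z : ι → R) : R :=
  ∑ k, x k * (T * y k - z k * T)

theorem map_fluct {S : Type*} [Ring S] (f : R →+* S) (T : R) (x y z : ι → R) :
    f (fluct T x y z) = fluct (f T) (fun k => f (x k)) (fun k => f (y k)) (fun k => f (z k)) := by
  simp only [fluct, map_sum, map_mul, map_sub]

theorem fluct_smul {S : Type*} [Monoid S] [DistribMulAction S R] [IsScalarTower S R R]
    [SMulCommClass S R R] (c : S) (T : R) (x y z : ι → R) :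
    fluct (c • T) x y z = c • fluct T x y z := by
  simp only [fluct, Finset.smul_sum, smul_mul_assoc, mul_smul_comm, ← smul_sub]

theorem fluct_fluct_comm_term (D x y z X Y Z : R) (hxX : Commute x X) (hyY : Commute y Y)
    (hxZ : Commute x Z) (hzX : Commute z X) (hzZ : Commute z Z) :
    x * (X * (D * Y - Z * D) * y - z * (X * (D * Y - Z * D)))
      = X * (x * (D * y - z * D) * Y - Z * (x * (D * y - z * D))) := by
  simp only [mul_sub, sub_mul, mul_assoc]
  simp only [hyY.eq, hxX.left_comm, hxZ.left_comm, hzX.left_comm, hzZ.left_comm]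
  abel

theorem fluct_fluct_comm (D : R) (x y z X Y Z : ι → R)
    (hxX : ∀ j k, Commute (x j) (X k)) (hyY : ∀ j k, Commute (y j) (Y k))
    (hxZ : ∀ j k, Commute (x j) (Z k)) (hzX : ∀ j k, Commute (z j) (X k))
    (hzZ : ∀ j k, Commute (z j) (Z k)) :
    fluct (fluct D X Y Z) x y z = fluct (fluct D x y z) X Y Z := by
  simp only [fluct, Finset.sum_mul, Finset.mul_sum, ← Finset.sum_sub_distrib]
  rw [Finset.sum_comm]
  exact Finset.sum_congr rfl fun k _ => Finset.sum_congr rfl fun j _ =>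
    fluct_fluct_comm_term D _ _ _ _ _ _ (hxX j k) (hyY j k) (hxZ j k) (hzX j k) (hzZ j k)

end Fluct

section HatConj

variable {V : Type*} [AddCommGroup V] [Module ℂ V] (J : V ≃ₗ⋆[ℂ] V)

theorem hatConj_apply (T : Module.End ℂ V) (v : V) : hatConj J T v = J (T (J.symm v)) := rfl

noncomputable def hatConjRingHom : Module.End ℂ V →+* Module.End ℂ V where
  toFun := hatConj J
  map_one' := by ext v; simp [hatConj_apply]
  map_mul' S T := by ext v; simp [hatConj_apply]
  map_zero' := by ext v; simp [hatConj_apply]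
  map_add' S T := by ext v; simp [hatConj_apply]

@[simp]
theorem hatConjRingHom_apply (T : Module.End ℂ V) : hatConjRingHom J T = hatConj J T := rfl

theorem hatConj_add (S T : Module.End ℂ V) : hatConj J (S + T) = hatConj J S + hatConj J T :=
  map_add (hatConjRingHom J) S T

theorem hatConj_fluct {ι : Type*} [Fintype ι] (T : Module.End ℂ V) (x y z : ι → Module.End ℂ V) :
    hatConj J (fluct T x y z) = fluct (hatConj J T) (fun k => hatConj J (x k))
      (fun k => hatConj J (y k)) (fun k => hatConj J (z k)) :=
  map_fluct (hatConjRingHom J) T x y z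

variable {J}

theorem hatConj_eq_smul_iff {T S : Module.End ℂ V} {c : ℂ} :
    hatConj J T = c • S ↔ ∀ v, J (T v) = c • S (J v) := by
  refine ⟨fun h v => ?_, fun h => LinearMap.ext fun v => ?_⟩
  · simpa [hatConj_apply] using LinearMap.congr_fun h (J v)
  · simp [hatConj_apply, h]

theorem hatConj_hatConj {ε : ℂ} (hJJ : ∀ v, J (J v) = ε • v) (T : Module.End ℂ V) :
    hatConj J (hatConj J T) = T := by
  ext v
  obtain ⟨w, rfl⟩ : ∃ w, v = J (J w) := ⟨J.symm (J.symm v), by simp⟩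
  rw [hatConj_apply, hatConj_apply, LinearEquiv.symm_apply_apply, LinearEquiv.symm_apply_apply,
    hJJ, hJJ, map_smul]

end HatConj

theorem fluctuated_compatible_with_real_structure_general {V A : Type*} [AddCommGroup V] [Module ℂ V]
    [Ring A] [Algebra ℂ A]
    (π : A →ₐ[ℂ] Module.End ℂ V) (J : V ≃ₗ⋆[ℂ] V)
    (ε : ℂ) (hJJ : ∀ v : V, J (J v) = ε • v)
    (σ : A ≃ₐ[ℂ] A)
    (hzero : ∀ a b : A, π a * hatConj J (π b) = hatConj J (π b) * π a)
    (D : Module.End ℂ V) (ε' : ℂ)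
    (hJD : ∀ v : V, J (D v) = ε' • D (J v))
    (n : ℕ) (a b : Fin n → A) :
    (∀ v : V, J (omegaTwo J π σ D a b v) = ε' • omegaTwo J π σ D a b (J v)) ∧
    (∀ v : V, J (twistedFluct J π σ D a b v) = ε' • twistedFluct J π σ D a b (J v)) := by
  set x := fun j => π (a j)
  set y := fun j => π (b j)
  set z := fun j => π (σ (b j))
  set X := fun j => hatConj J (x j)
  set Y := fun j => hatConj J (y j)
  set Z := fun j => hatConj J (z j)
  have hinv : ∀ T, hatConj J (hatConj J T) = T := hatConj_hatConj hJJ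
  have hD : hatConj J D = ε' • D := hatConj_eq_smul_iff.mpr hJD
  set ω₁ := fluct D x y z
  set ω₁hat := fluct D X Y Z
  set ω₂ := fluct ω₁ X Y Z
  have hω₁ : hatConj J ω₁ = ε' • ω₁hat := by
    rw [hatConj_fluct, hD, fluct_smul]
  have hω₁hat : hatConj J ω₁hat = ε' • ω₁ := by
    rw [hatConj_fluct, hD, fluct_smul]
    simp only [X, Y, Z, hinv]
    rfl
  have hω₂ : hatConj J ω₂ = ε' • ω₂ := by
    rw [hatConj_fluct, hω₁, fluct_smul]
    simp only [X, Y, Z, hinv]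
    rw [fluct_fluct_comm D x y z X Y Z (fun _ _ => hzero _ _) (fun _ _ => hzero _ _)
      (fun _ _ => hzero _ _) (fun _ _ => hzero _ _) (fun _ _ => hzero _ _)]
  have hDω : hatConj J (D + ω₁ + ω₁hat + ω₂) = ε' • (D + ω₁ + ω₁hat + ω₂) := by
    rw [hatConj_add, hatConj_add, hatConj_add, hD, hω₁, hω₁hat, hω₂, smul_add, smul_add, smul_add]
    abel
  exact ⟨hatConj_eq_smul_iff.mp hω₂, hatConj_eq_smul_iff.mp hDω⟩

/-- the non-linear term satisfies `J∘ω₂ = ε'·(ω₂∘J)`, and consequently the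
twisted-fluctuated operator is compatible with the real structure:
`J∘D_ω = ε'·(D_ω∘J)`. -/
theorem fluctuated_compatible_with_real_structure {V A : Type*} [AddCommGroup V] [Module ℂ V]
    [Ring A] [Algebra ℂ A] [StarRing A]
    (π : A →ₐ[ℂ] Module.End ℂ V) (J : V ≃ₗ⋆[ℂ] V)
    (ε : ℂ) (hε : ε = 1 ∨ ε = -1) (hJJ : ∀ v : V, J (J v) = ε • v)
    (σ : A ≃ₐ[ℂ] A) (hreg : ∀ a : A, σ (star a) = star (σ.symm a))
    (hzero : ∀ a b : A, π a * hatConj J (π b) = hatConj J (π b) * π a)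
    (D : Module.End ℂ V) (ε' : ℂ) (hε' : ε' = 1 ∨ ε' = -1)
    (hJD : ∀ v : V, J (D v) = ε' • D (J v))
    (n : ℕ) (a b : Fin n → A) :
    (∀ v : V, J (omegaTwo J π σ D a b v) = ε' • omegaTwo J π σ D a b (J v)) ∧
    (∀ v : V, J (twistedFluct J π σ D a b v) = ε' • twistedFluct J π σ D a b (J v)) :=
  fluctuated_compatible_with_real_structure_general π J ε hJJ σ hzero D ε' hJD n a b
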